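/- The subsequence {C_{4r−2}} of the Hardy–Littlewood constants has mean value one: (1/m) · ∑_{r=1}^{m} C_{4r−2} → 1 as m → ∞. -/

import Mathlib

open Filter Topology

/-- The twin prime constant `C₂ = ∏_{p > 2 prime} (1 - 1/(p-1)²)`. -/
noncomputable def twinPrimeConst : ℝ :=
  ∏' p : {p : ℕ // p.Prime ∧ 2 < p}, (1 - 1 / ((p : ℕ) - 1 : ℝ) ^ 2)

/-- The Hardy–Littlewood constant `C_{2r} = C₂ ∏_{p ∣ r, p > 2} (p-1)/(p-2)`. -/
noncomputable def HLconst (r : ℕ) : ℝ :=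
  twinPrimeConst *
    ∏ p ∈ r.primeFactors.filter (fun p => 2 < p), (((p : ℝ) - 1) / ((p : ℝ) - 2))

/-!
For odd `n`, `∏_{p ∣ n} (p - 1)/(p - 2) = ∏_{p ∣ n} (1 + 1/(p - 2)) = ∑_{d ∣ n} g(d)`, where
`g = hlWeight` is supported on odd squarefree `d` with `g(d) = ∏_{p ∣ d} 1/(p - 2)`, and
`hlDensity d = g(d)/d`. Summing over `n = 2r + 1 < 2m` and exchanging the sums, an odd `d` divides
`2r + 1` for `m/d + O(1)` of the `r < m`, so the mean of the products is
`∑_{d < 2m} g(d)/d + O((1/m) ∑_{d < 2m} g(d))`. The error tends to `0` by dominated convergence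
because `∑ g(d)/d` converges, and by the Euler product
`∑ g(d)/d = ∏_{p > 2} (1 + 1/(p(p - 2))) = ∏_{p > 2} (1 - 1/(p - 1)²)⁻¹ = 1/C₂`.
-/

open Finset

noncomputable def hlFactor (n : ℕ) : ℝ :=
  ∏ p ∈ n.primeFactors.filter (fun p => 2 < p), (((p : ℝ) - 1) / ((p : ℝ) - 2))

noncomputable def hlWeight (d : ℕ) : ℝ :=
  if Squarefree d ∧ Odd d then ∏ p ∈ d.primeFactors, 1 / ((p : ℝ) - 2) else 0

noncomputable def hlDensity (d : ℕ) : ℝ := hlWeight d / d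

lemma Nat.two_lt_of_mem_primeFactors_of_odd {n p : ℕ} (hp : p ∈ n.primeFactors) (hn : Odd n) :
    2 < p := by
  have hp2 : p ≠ 2 := by
    rintro rfl
    exact Nat.not_even_iff_odd.mpr hn (even_iff_two_dvd.mpr (Nat.dvd_of_mem_primeFactors hp))
  have := (Nat.prime_of_mem_primeFactors hp).two_le
  omega

lemma hlWeight_nonneg (d : ℕ) : 0 ≤ hlWeight d := by
  unfold hlWeight
  split_ifs with h
  · refine prod_nonneg fun p hp => one_div_nonneg.mpr ?_
    have : (2 : ℝ) < p := by exact_mod_cast Nat.two_lt_of_mem_primeFactors_of_odd hp h.2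
    linarith
  · rfl

lemma hlDensity_nonneg (d : ℕ) : 0 ≤ hlDensity d := div_nonneg (hlWeight_nonneg d) d.cast_nonneg

lemma natCast_mul_hlDensity (d : ℕ) : d * hlDensity d = hlWeight d := by
  rcases eq_or_ne d 0 with rfl | hd
  · simp [hlWeight]
  · exact mul_div_cancel₀ _ (Nat.cast_ne_zero.mpr hd)

theorem Nat.sum_divisors_filter_squarefree_prod_primeFactors {R : Type*} [CommSemiring R]
    {n : ℕ} (hn : n ≠ 0) (h : ℕ → R) :
    ∑ d ∈ n.divisors with Squarefree d, ∏ p ∈ d.primeFactors, h p =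
      ∏ p ∈ n.primeFactors, (1 + h p) := by
  rw [Nat.sum_divisors_filter_squarefree hn, Nat.factors_eq, List.toFinset_coe, prod_one_add]
  refine sum_congr rfl fun t ht => ?_
  rw [Finset.prod_val, Function.id_def, Nat.primeFactors_prod fun p hp =>
    Nat.prime_of_mem_primeFactors (mem_powerset.mp ht hp)]

lemma hlFactor_eq_sum_divisors_hlWeight {n : ℕ} (hn : Odd n) :
    hlFactor n = ∑ d ∈ n.divisors, hlWeight d := by
  have hweight : ∀ d ∈ n.divisors, hlWeight d =
      if Squarefree d then ∏ p ∈ d.primeFactors, 1 / ((p : ℝ) - 2) else 0 := fun d hd => by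
    simp [hlWeight, hn.of_dvd_nat (Nat.dvd_of_mem_divisors hd)]
  have hodd : ∀ p ∈ n.primeFactors, 2 < p := fun p hp => Nat.two_lt_of_mem_primeFactors_of_odd hp hn
  rw [sum_congr rfl hweight, ← sum_filter,
    Nat.sum_divisors_filter_squarefree_prod_primeFactors hn.pos.ne', hlFactor,
    filter_true_of_mem hodd]
  refine prod_congr rfl fun p hp => ?_
  have : (p : ℝ) - 2 ≠ 0 := sub_ne_zero.mpr (by exact_mod_cast (hodd p hp).ne')
  field_simp
  ring

theorem Finset.sum_sum_divisors_eq_sum_card_nsmul {ι M : Type*} [AddCommMonoid M]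
    (s : Finset ι) (n : ι → ℕ) {N : ℕ} (hn : ∀ i ∈ s, n i ≠ 0 ∧ n i < N) (f : ℕ → M) :
    ∑ i ∈ s, ∑ d ∈ (n i).divisors, f d = ∑ d ∈ range N, #{i ∈ s | d ∣ n i} • f d := by
  have hdiv : ∀ i ∈ s, (n i).divisors = {d ∈ range N | d ∣ n i} := fun i hi => by
    ext d
    simp only [Nat.mem_divisors, mem_filter, mem_range]
    exact ⟨fun ⟨hd, hne⟩ => ⟨(Nat.le_of_dvd (Nat.pos_of_ne_zero hne) hd).trans_lt (hn i hi).2, hd⟩,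
      fun ⟨_, hd⟩ => ⟨hd, (hn i hi).1⟩⟩
  rw [sum_congr rfl fun i hi => by rw [hdiv i hi, sum_filter], sum_comm]
  refine sum_congr rfl fun d _ => ?_
  rw [← sum_filter, sum_const]

lemma Nat.abs_count_modEq_sub_div_le_one {d : ℕ} (hd : 0 < d) (b v : ℕ) :
    |(b.count (· ≡ v [MOD d]) : ℝ) - b / d| ≤ 1 := by
  have h1 : ((b / d : ℕ) : ℝ) ≤ b / d := Nat.cast_div_le
  have h2 : (b / d : ℝ) < (b / d : ℕ) + 1 := by
    rw [← Nat.floor_div_eq_div (K := ℝ)]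
    exact Nat.lt_floor_add_one _
  rw [Nat.count_modEq_card b hd v, abs_le]
  split_ifs <;> push_cast <;> constructor <;> linarith

lemma card_filter_range_dvd_two_mul_add_one (k m : ℕ) :
    #{r ∈ range m | 2 * k + 1 ∣ 2 * r + 1} = m.count (· ≡ k [MOD 2 * k + 1]) := by
  have hcop : IsCoprime ((2 * k + 1 : ℕ) : ℤ) 2 :=
    Nat.isCoprime_iff_coprime.mpr (Nat.coprime_two_right.mpr (odd_two_mul_add_one k))
  rw [Nat.count_eq_card_filter_range]
  refine congrArg card (filter_congr fun r _ => ?_)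
  rw [Nat.modEq_iff_dvd, ← Int.natCast_dvd_natCast, ← dvd_sub_self_right,
    dvd_sub_comm (b := (k : ℤ)), show ((2 * r + 1 : ℕ) : ℤ) - (2 * k + 1 : ℕ) = 2 * (r - k) by push_cast; ring]
  exact ⟨hcop.dvd_of_dvd_mul_left, fun h => h.mul_left 2⟩

lemma abs_card_filter_range_dvd_sub_div_le_one {d : ℕ} (hd : Odd d) (m : ℕ) :
    |(#{r ∈ range m | d ∣ 2 * r + 1} : ℝ) - m / d| ≤ 1 := by
  obtain ⟨k, rfl⟩ := hd
  rw [card_filter_range_dvd_two_mul_add_one]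
  exact Nat.abs_count_modEq_sub_div_le_one (by omega) m k

lemma abs_sum_hlFactor_sub_le (m : ℕ) :
    |∑ r ∈ range m, hlFactor (2 * r + 1) - m * ∑ d ∈ range (2 * m), hlDensity d| ≤
      ∑ d ∈ range (2 * m), hlWeight d := by
  have hswap : ∑ r ∈ range m, hlFactor (2 * r + 1) =
      ∑ d ∈ range (2 * m), (#{r ∈ range m | d ∣ 2 * r + 1} : ℝ) * hlWeight d := by
    simp_rw [hlFactor_eq_sum_divisors_hlWeight (odd_two_mul_add_one _), ← nsmul_eq_mul]
    exact sum_sum_divisors_eq_sum_card_nsmul _ _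
      (fun r hr => ⟨by omega, by have := mem_range.mp hr; omega⟩) _
  rw [hswap, mul_sum, ← sum_sub_distrib]
  refine (abs_sum_le_sum_abs _ _).trans (sum_le_sum fun d _ => ?_)
  by_cases hd : Odd d
  · rw [hlDensity, show ∀ c : ℝ, c * hlWeight d - m * (hlWeight d / d) =
        hlWeight d * (c - m / d) from fun c => by ring, abs_mul, abs_of_nonneg (hlWeight_nonneg d)]
    exact mul_le_of_le_one_right (hlWeight_nonneg d) (abs_card_filter_range_dvd_sub_div_le_one hd m)
  · simp [hlDensity, hlWeight, hd]

theorem Summable.tendsto_sum_range_mul_div_atTop_zero {f : ℕ → ℝ} (hf : Summable f) (c : ℕ) :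
    Tendsto (fun m : ℕ => (∑ d ∈ range (c * m), d * f d) / m) atTop (𝓝 0) := by
  set term : ℕ → ℕ → ℝ := fun m d => if d < c * m then d / m * f d else 0
  have hsum : ∀ m : ℕ, (∑ d ∈ range (c * m), d * f d) / m = ∑' d, term m d := fun m => by
    rw [tsum_eq_sum (s := range (c * m)) fun d hd => if_neg (by simpa using hd), sum_div]
    exact sum_congr rfl fun d hd => by simp [mem_range.mp hd, div_mul_eq_mul_div]
  have hlim : ∀ d, Tendsto (term · d) atTop (𝓝 0) := fun d => by
    refine squeeze_zero_norm (fun m => ?_) (tendsto_const_div_atTop_nhds_zero_nat (d * |f d|))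
    simp only [term]
    split_ifs
    · rw [Real.norm_eq_abs, abs_mul, abs_div, Nat.abs_cast, Nat.abs_cast]
      exact le_of_eq (by ring)
    · simp only [norm_zero]; positivity
  have hbound : ∀ m d, ‖term m d‖ ≤ c * |f d| := fun m d => by
    simp only [term]
    split_ifs with h
    · rw [Real.norm_eq_abs, abs_mul, abs_of_nonneg (by positivity)]
      refine mul_le_mul_of_nonneg_right ?_ (abs_nonneg _)
      rw [div_le_iff₀ (by exact_mod_cast Nat.pos_of_mul_pos_left (d.zero_le.trans_lt h))]
      exact_mod_cast h.le
    · simp only [norm_zero]; positivity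
  simpa only [hsum, tsum_zero] using tendsto_tsum_of_dominated_convergence
    (hf.abs.mul_left (c : ℝ)) hlim (Eventually.of_forall hbound)

lemma hlWeight_mul {m n : ℕ} (h : m.Coprime n) : hlWeight (m * n) = hlWeight m * hlWeight n := by
  have hcond : (Squarefree (m * n) ∧ Odd (m * n)) ↔
      (Squarefree m ∧ Odd m) ∧ (Squarefree n ∧ Odd n) := by
    rw [Nat.squarefree_mul h, Nat.odd_mul]
    tauto
  unfold hlWeight
  by_cases hm : Squarefree m ∧ Odd m <;> by_cases hn : Squarefree n ∧ Odd n <;>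
    simp only [hcond, hm, hn, and_self, and_false, false_and, if_true, if_false, mul_zero, zero_mul]
  rw [Nat.Coprime.primeFactors_mul h, prod_union h.disjoint_primeFactors]

lemma hlDensity_mul {m n : ℕ} (h : m.Coprime n) :
    hlDensity (m * n) = hlDensity m * hlDensity n := by
  rw [hlDensity, hlWeight_mul h, Nat.cast_mul, mul_div_mul_comm, hlDensity, hlDensity]

lemma hlDensity_eq_prod_primeFactors {d : ℕ} (hsq : Squarefree d) (hd : Odd d) :
    hlDensity d = ∏ p ∈ d.primeFactors, 1 / ((p : ℝ) * (p - 2)) := by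
  rw [hlDensity, hlWeight, if_pos ⟨hsq, hd⟩]
  nth_rw 2 [← Nat.prod_primeFactors_of_squarefree hsq]
  rw [Nat.cast_prod, ← prod_div_distrib]
  refine prod_congr rfl fun p _ => ?_
  rw [div_div, mul_comm]

lemma hlDensity_prime {p : ℕ} (hp : p.Prime) (h2 : 2 < p) :
    hlDensity p = 1 / ((p : ℝ) * (p - 2)) := by
  rw [hlDensity_eq_prod_primeFactors hp.squarefree (hp.odd_of_ne_two h2.ne'), hp.primeFactors,
    prod_singleton]

lemma one_div_mul_sub_two_le {x : ℝ} (hx : 3 ≤ x) : 1 / (x * (x - 2)) ≤ 3 / x ^ 2 := by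
  rw [div_le_div_iff₀ (by nlinarith) (by positivity)]
  nlinarith

lemma summable_hlDensity : Summable hlDensity := by
  -- on odd squarefree `d`, `hlDensity d ≤ ∏_{p ∣ d} 3/p²` and `d ↦ d.primeFactors` is injective
  set S := {n : ℕ | Squarefree n ∧ Odd n}
  have hprod : Summable fun s : Finset ℕ => ∏ p ∈ s, (3 : ℝ) / p ^ 2 :=
    summable_finsetProd_of_summable_nonneg (fun _ => by positivity)
      (by simpa only [mul_one_div] using (Real.summable_one_div_nat_pow.mpr one_lt_two).mul_left 3)
  have hinj : Function.Injective fun n : S => n.1.primeFactors := fun a b hab => by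
    have hab : a.1.primeFactors = b.1.primeFactors := hab
    exact Subtype.ext (by rw [← Nat.prod_primeFactors_of_squarefree a.2.1, hab,
      Nat.prod_primeFactors_of_squarefree b.2.1])
  have hS : Summable fun n : S => hlDensity n := by
    refine .of_nonneg_of_le (fun n => hlDensity_nonneg n) (fun n => ?_) (hprod.comp_injective hinj)
    have hp3 : ∀ p ∈ n.1.primeFactors, (3 : ℝ) ≤ p := fun p hp => by
      exact_mod_cast (Nat.two_lt_of_mem_primeFactors_of_odd hp n.2.2 : 3 ≤ p)
    rw [hlDensity_eq_prod_primeFactors n.2.1 n.2.2]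
    exact prod_le_prod (fun p hp => one_div_nonneg.mpr (by nlinarith [hp3 p hp]))
      fun p hp => one_div_mul_sub_two_le (hp3 p hp)
  refine (Function.Injective.summable_iff Subtype.val_injective fun n hn => ?_).mp hS
  rw [Subtype.range_coe] at hn
  rw [hlDensity, hlWeight, if_neg (show ¬(Squarefree n ∧ Odd n) from hn), zero_div]

lemma hlDensity_zero : hlDensity 0 = 0 := by simp [hlDensity]

lemma hlDensity_one : hlDensity 1 = 1 := by simp [hlDensity, hlWeight]

lemma tsum_hlDensity_prime_pow {p : ℕ} (hp : p.Prime) :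
    ∑' e : ℕ, hlDensity (p ^ e) = 1 + hlDensity p := by
  rw [tsum_eq_sum (s := range 2) fun e he => ?_]
  · simp [sum_range_succ, hlDensity_one]
  · have he : 1 < e := by simpa using he
    have hsq : ¬ Squarefree (p ^ e) := by
      rw [Nat.squarefree_pow_iff hp.ne_one (by omega)]
      omega
    rw [hlDensity, hlWeight, if_neg fun h => hsq h.1, zero_div]

lemma hasProd_one_add_hlDensity :
    HasProd (fun p : {p : ℕ // p.Prime ∧ 2 < p} => 1 + hlDensity p) (∑' n, hlDensity n) := by
  have heuler := EulerProduct.eulerProduct_hasProd_mulIndicator hlDensity_one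
    (fun h => hlDensity_mul h) (by simpa [abs_of_nonneg (hlDensity_nonneg _)] using
      summable_hlDensity) hlDensity_zero
  have hfactors : {p | p.Prime ∧ 2 < p}.mulIndicator (fun p => 1 + hlDensity p) =
      {p | p.Prime}.mulIndicator fun p => ∑' e, hlDensity (p ^ e) := funext fun p => by
    by_cases hp : p.Prime
    · rw [Set.mulIndicator_of_mem (s := {p : ℕ | p.Prime}) hp, tsum_hlDensity_prime_pow hp]
      rcases hp.two_le.lt_or_eq with h2 | rfl
      · exact Set.mulIndicator_of_mem (s := {p : ℕ | p.Prime ∧ 2 < p}) ⟨hp, h2⟩ _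
      · rw [Set.mulIndicator_of_notMem (by simp)]
        simp [hlDensity, hlWeight]
    · rw [Set.mulIndicator_of_notMem (s := {p : ℕ | p.Prime}) hp,
        Set.mulIndicator_of_notMem (s := {p : ℕ | p.Prime ∧ 2 < p}) fun h => hp h.1]
  rw [← hfactors] at heuler
  exact (hasProd_subtype_iff_mulIndicator (s := {p : ℕ | p.Prime ∧ 2 < p})).mpr heuler

lemma twinPrimeConst_mul_tsum_hlDensity : twinPrimeConst * ∑' n, hlDensity n = 1 := by
  have hS : 0 < ∑' n, hlDensity n :=
    one_pos.trans_le (hlDensity_one ▸ summable_hlDensity.le_tsum 1 fun n _ => hlDensity_nonneg n)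
  have hfactor : ∀ p : {p : ℕ // p.Prime ∧ 2 < p},
      (1 + hlDensity p)⁻¹ = 1 - 1 / ((p : ℕ) - 1 : ℝ) ^ 2 := by
    rintro ⟨p, hp, h2⟩
    have h2' : (2 : ℝ) < p := by exact_mod_cast h2
    have : (p : ℝ) - 1 ≠ 0 := by linarith
    have : (p : ℝ) - 2 ≠ 0 := by linarith
    rw [hlDensity_prime hp h2]
    refine (eq_inv_of_mul_eq_one_left ?_).symm
    field_simp
    ring
  rw [twinPrimeConst, ← funext hfactor, (hasProd_one_add_hlDensity.inv₀ hS.ne').tprod_eq,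
    inv_mul_cancel₀ hS.ne']

lemma abs_mean_hlFactor_sub_le (m : ℕ) :
    |(∑ r ∈ range m, hlFactor (2 * r + 1)) / m - ∑ d ∈ range (2 * m), hlDensity d| ≤
      (∑ d ∈ range (2 * m), hlWeight d) / m := by
  rcases eq_or_ne m 0 with rfl | hm
  · simp
  have hm' : (0 : ℝ) < m := by positivity
  rw [div_sub' hm'.ne', abs_div, abs_of_pos hm']
  exact div_le_div_of_nonneg_right (abs_sum_hlFactor_sub_le m) hm'.le

lemma tendsto_mean_hlFactor :
    Tendsto (fun m : ℕ => (∑ r ∈ range m, hlFactor (2 * r + 1)) / m) atTop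
      (𝓝 (∑' d, hlDensity d)) := by
  have hpartial : Tendsto (fun m : ℕ => ∑ d ∈ range (2 * m), hlDensity d) atTop
      (𝓝 (∑' d, hlDensity d)) :=
    summable_hlDensity.hasSum.tendsto_sum_nat.comp (tendsto_id.const_mul_atTop' two_pos)
  have herror : Tendsto (fun m : ℕ => (∑ r ∈ range m, hlFactor (2 * r + 1)) / m -
      ∑ d ∈ range (2 * m), hlDensity d) atTop (𝓝 0) := by
    refine squeeze_zero_norm (fun m => abs_mean_hlFactor_sub_le m) ?_
    simpa only [natCast_mul_hlDensity] using
      summable_hlDensity.tendsto_sum_range_mul_div_atTop_zero 2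
  simpa using herror.add hpartial

/-- The subsequence `{C_{4r-2}} = {C_{2(2r-1)}}` of the Hardy–Littlewood constants has
mean value one: `(1/m) ∑_{r=1}^m C_{4r-2} → 1` as `m → ∞`. -/
theorem HLconst_odd_subsequence_mean_value_one :
    Tendsto (fun m : ℕ => (∑ r ∈ Finset.Icc 1 m, HLconst (2 * r - 1)) / (m : ℝ)) atTop
      (𝓝 1) := by
  have hreindex : ∀ m : ℕ, ∑ r ∈ Icc 1 m, HLconst (2 * r - 1) =
      twinPrimeConst * ∑ r ∈ range m, hlFactor (2 * r + 1) := fun m => by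
    rw [← Ico_add_one_right_eq_Icc, show Ico 1 (m + 1) = Ico (0 + 1) (m + 1) from rfl,
      ← sum_Ico_add', mul_sum, range_eq_Ico]
    exact sum_congr rfl fun r _ => by rw [show 2 * (r + 1) - 1 = 2 * r + 1 by omega]; rfl
  have hlim := tendsto_mean_hlFactor.const_mul twinPrimeConst
  rw [twinPrimeConst_mul_tsum_hlDensity] at hlim
  refine hlim.congr fun m => ?_
  rw [hreindex, mul_div_assoc]
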